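/- arXiv:math/0305202 — 10 statements merged into one kernel-verified Lean document; each statement's English description precedes it below -/
import Mathlib

section
/- Let D be an integral domain, let a, b be nonzero elements of D, and let ⋆ be a semistar operation on D. Then (aD ∩ bD)^⋆ is an ideal of ⋆-finite type if and only if (((a,b)D)^{-1})^⋆ is a fractional ideal of ⋆-finite type. -/
/-! Since `aD ∩ bD = ab · (D : (a, b))`, the two modules differ by the nonzero factor `ab`.
A semistar operation commutes with multiplication by nonzero scalars, so being of `⋆`-finite
type is invariant under such scalings. -/

open Pointwise

section Preamble

variable (D : Type*) [CommRing D] [IsDomain D]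
variable (K : Type*) [Field K] [Algebra D K] [IsFractionRing D K]

/-- The localization `D_P` of `D` at a prime `P`, as a subalgebra of the quotient field. -/
noncomputable def locAt (P : Ideal D) (hP : P.IsPrime) : Subalgebra D K :=
  Localization.subalgebra K P.primeCompl
    (fun x hx => mem_nonZeroDivisors_of_ne_zero (fun h0 : x = 0 => hx (h0 ▸ P.zero_mem)))

/-- `D_P` as a `D`-submodule of the quotient field. -/
noncomputable def locAtM (P : Ideal D) (hP : P.IsPrime) : Submodule D K :=
  Subalgebra.toSubmodule (locAt D K P hP)

variable {D K}

/-- `E` is finitely generated as a module over the subring corresponding to `Rm`. -/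
def IsRFG (Rm E : Submodule D K) : Prop :=
  ∃ F₀ : Submodule D K, F₀.FG ∧ F₀ ≠ ⊥ ∧ E = F₀ * Rm

/-- `s` is a semistar operation on the subring corresponding to `Rm`
(on `D` itself when `Rm = 1`): it is defined on the nonzero `Rm`-submodules of `K`. -/
def IsSemistar (Rm : Submodule D K) (s : Submodule D K → Submodule D K) : Prop :=
  (∀ E, E ≠ ⊥ → Rm * E ≤ E → Rm * s E ≤ s E) ∧
  (∀ (x : K) (E), x ≠ 0 → E ≠ ⊥ → Rm * E ≤ E → s (x • E) = x • s E) ∧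
  (∀ E F, E ≠ ⊥ → F ≠ ⊥ → Rm * E ≤ E → Rm * F ≤ F → E ≤ F → s E ≤ s F) ∧
  (∀ E, E ≠ ⊥ → Rm * E ≤ E → E ≤ s E) ∧
  (∀ E, E ≠ ⊥ → Rm * E ≤ E → s (s E) = s E)

/-- `s` is of finite type. -/
def IsFiniteType (Rm : Submodule D K) (s : Submodule D K → Submodule D K) : Prop :=
  ∀ E, E ≠ ⊥ → Rm * E ≤ E → s E = sSup {G | ∃ F, IsRFG Rm F ∧ F ≤ E ∧ G = s F}

/-- `s` is a.b. -/
def IsAB (Rm : Submodule D K) (s : Submodule D K → Submodule D K) : Prop :=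
  ∀ F G H : Submodule D K, IsRFG Rm F → G ≠ ⊥ → Rm * G ≤ G → H ≠ ⊥ → Rm * H ≤ H →
    s (F * G) ≤ s (F * H) → s G ≤ s H

/-- `s` is e.a.b. -/
def IsEAB (Rm : Submodule D K) (s : Submodule D K → Submodule D K) : Prop :=
  ∀ F G H : Submodule D K, IsRFG Rm F → IsRFG Rm G → IsRFG Rm H →
    s (F * G) ≤ s (F * H) → s G ≤ s H

/-- `s` is stable. -/
def IsStable (Rm : Submodule D K) (s : Submodule D K → Submodule D K) : Prop :=
  ∀ E F, E ≠ ⊥ → F ≠ ⊥ → Rm * E ≤ E → Rm * F ≤ F → s (E ⊓ F) = s E ⊓ s F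

/-- The divisorial closure `E ↦ (R : (R : E))` over the subring corresponding to `Rm`. -/
def vOp (Rm E : Submodule D K) : Submodule D K := Rm / (Rm / E)

/-- The `t`-operation over the subring corresponding to `Rm`. -/
def tOp (Rm E : Submodule D K) : Submodule D K :=
  sSup {G | ∃ F, IsRFG Rm F ∧ F ≤ E ∧ G = vOp Rm F}

end Preamble

variable {D : Type*} [CommRing D] [IsDomain D]
variable {K : Type*} [Field K] [Algebra D K] [IsFractionRing D K]

namespace Submodule

section PointwiseSMul

variable {α R M : Type*} [Semiring R] [AddCommMonoid M] [Module R M]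

theorem FG.pointwise_smul [Monoid α] [DistribMulAction α M] [SMulCommClass α R M]
    {S : Submodule R M} (hS : S.FG) (a : α) : (a • S).FG :=
  hS.map _

variable [GroupWithZero α] [DistribMulAction α M] [SMulCommClass α R M]

theorem mem_pointwise_smul_iff_inv_smul_mem₀ {a : α} (ha : a ≠ 0) {S : Submodule R M} {x : M} :
    x ∈ a • S ↔ a⁻¹ • x ∈ S := by
  rw [mem_smul_pointwise_iff_exists]
  constructor
  · rintro ⟨y, hy, rfl⟩
    rwa [inv_smul_smul₀ ha]
  · exact fun hx => ⟨a⁻¹ • x, hx, smul_inv_smul₀ ha x⟩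

theorem pointwise_smul_ne_bot₀ {a : α} (ha : a ≠ 0) {S : Submodule R M} (hS : S ≠ ⊥) :
    a • S ≠ ⊥ := by
  intro h
  apply hS
  rw [← inv_smul_smul₀ ha S, h, smul_bot']

end PointwiseSMul

theorem mem_div_span_iff {R A : Type*} [CommSemiring R] [CommSemiring A] [Algebra R A]
    {I : Submodule R A} {S : Set A} {x : A} :
    x ∈ I / span R S ↔ ∀ y ∈ S, x * y ∈ I := by
  rw [mem_div_iff_forall_mul_mem]
  exact span_le (p := I.comap (LinearMap.mulLeft R x))

section Field

variable {R L : Type*} [CommSemiring R] [Field L] [Algebra R L]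

theorem mem_span_singleton_iff_inv_mul_mem_one {a x : L} (ha : a ≠ 0) :
    x ∈ span R {a} ↔ a⁻¹ * x ∈ (1 : Submodule R L) := by
  rw [← smul_one_eq_span, mem_pointwise_smul_iff_inv_smul_mem₀ ha, smul_eq_mul]

theorem span_singleton_inf_span_singleton_eq_smul {a b : L} (ha : a ≠ 0) (hb : b ≠ 0) :
    span R {a} ⊓ span R {b} = (a * b) • (1 / span R {a, b}) := by
  ext x
  rw [mem_inf, mem_span_singleton_iff_inv_mul_mem_one ha, mem_span_singleton_iff_inv_mul_mem_one hb,
    mem_pointwise_smul_iff_inv_smul_mem₀ (mul_ne_zero ha hb), mem_div_span_iff]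
  have hxa : (a * b)⁻¹ • x * a = b⁻¹ * x := by rw [smul_eq_mul]; field_simp
  have hxb : (a * b)⁻¹ • x * b = a⁻¹ * x := by rw [smul_eq_mul]; field_simp
  simp only [Set.mem_insert_iff, Set.mem_singleton_iff, forall_eq_or_imp, forall_eq, hxa, hxb,
    and_comm]

end Field

end Submodule

section StarFiniteType

variable {R L : Type*} [CommRing R] [Field L] [Algebra R L]

def IsStarFiniteType (s : Submodule R L → Submodule R L) (E : Submodule R L) : Prop :=
  ∃ F : Submodule R L, F.FG ∧ F ≠ ⊥ ∧ s F = s E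

variable {s : Submodule R L → Submodule R L}

theorem IsStarFiniteType.smul (hs : IsSemistar 1 s) {E : Submodule R L} (hE : E ≠ ⊥)
    (hfin : IsStarFiniteType s E) {c : L} (hc : c ≠ 0) : IsStarFiniteType s (c • E) := by
  obtain ⟨F, hFG, hF, hsF⟩ := hfin
  refine ⟨c • F, hFG.pointwise_smul c, Submodule.pointwise_smul_ne_bot₀ hc hF, ?_⟩
  rw [hs.2.1 c F hc hF (one_mul F).le, hs.2.1 c E hc hE (one_mul E).le, hsF]

theorem isStarFiniteType_smul_iff (hs : IsSemistar 1 s) {E : Submodule R L} (hE : E ≠ ⊥) {c : L}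
    (hc : c ≠ 0) : IsStarFiniteType s (c • E) ↔ IsStarFiniteType s E := by
  refine ⟨fun h => ?_, fun h => h.smul hs hE hc⟩
  simpa only [inv_smul_smul₀ hc] using
    h.smul hs (Submodule.pointwise_smul_ne_bot₀ hc hE) (inv_ne_zero hc)

end StarFiniteType

/-- `(aD ∩ bD)^⋆` is of `⋆`-finite type iff `(((a,b)D)⁻¹)^⋆` is of
`⋆`-finite type. -/
theorem stmt1 (s : Submodule D K → Submodule D K) (hs : IsSemistar (1 : Submodule D K) s)
    (a b : D) (ha : a ≠ 0) (hb : b ≠ 0) :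
    (∃ F : Submodule D K, F.FG ∧ F ≠ ⊥ ∧
        s F = s (Submodule.span D {algebraMap D K a} ⊓ Submodule.span D {algebraMap D K b})) ↔
      (∃ F : Submodule D K, F.FG ∧ F ≠ ⊥ ∧
        s F = s ((1 : Submodule D K) / Submodule.span D {algebraMap D K a, algebraMap D K b})) := by
  have hinj := IsFractionRing.injective D K
  have ha' : algebraMap D K a ≠ 0 := (map_ne_zero_iff _ hinj).mpr ha
  have hb' : algebraMap D K b ≠ 0 := (map_ne_zero_iff _ hinj).mpr hb
  have hpair : Submodule.span D {algebraMap D K a, algebraMap D K b} ≤ 1 := by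
    rw [Submodule.span_le, Set.insert_subset_iff, Set.singleton_subset_iff]
    exact ⟨Submodule.algebraMap_mem a, Submodule.algebraMap_mem b⟩
  have hdual : (1 : Submodule D K) / Submodule.span D {algebraMap D K a, algebraMap D K b} ≠ ⊥ :=
    (Submodule.ne_bot_iff _).mpr ⟨1, Submodule.one_mem_div.mpr hpair, one_ne_zero⟩
  rw [Submodule.span_singleton_inf_span_singleton_eq_smul ha' hb']
  show IsStarFiniteType s _ ↔ IsStarFiniteType s _
  exact isStarFiniteType_smul_iff hs hdual (mul_ne_zero ha' hb')
end

section
/- Let ⋆ be a semistar operation on an integral domain D and let P be a prime ideal of D. Define ⋆_P on D_P by E^{⋆_P} := E^⋆ for each nonzero D_P-submodule E of the quotient field K. If ⋆ is an a.b. semistar operation on D, then ⋆_P is an a.b. semistar operation on D_P. -/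
open Pointwise

variable {D : Type*} [CommRing D] [IsDomain D]
variable {K : Type*} [Field K] [Algebra D K] [IsFractionRing D K]

theorem one_le_locAtM (P : Ideal D) (hP : P.IsPrime) : (1 : Submodule D K) ≤ locAtM D K P hP :=
  Submodule.one_le.mpr (locAt D K P hP).one_mem

theorem IsAB.of_one_le {A L : Type*} [CommRing A] [Field L] [Algebra A L] {R : Submodule A L}
    (hR : 1 ≤ R) {s : Submodule A L → Submodule A L} (hab : IsAB 1 s) : IsAB R s := by
  rintro _ G H ⟨F₀, hF₀, hF₀ne, rfl⟩ hG hRG hH hRH hle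
  have hRG : R * G = G := le_antisymm hRG (le_mul_of_one_le_left' hR)
  have hRH : R * H = H := le_antisymm hRH (le_mul_of_one_le_left' hR)
  rw [mul_assoc, mul_assoc, hRG, hRH] at hle
  exact hab F₀ G H ⟨F₀, hF₀, hF₀ne, (mul_one F₀).symm⟩ hG (one_mul G).le hH (one_mul H).le hle

theorem stmt2_general (P : Ideal D) (hP : P.IsPrime) (s : Submodule D K → Submodule D K)
    (hab : IsAB (1 : Submodule D K) s) :
    IsAB (locAtM D K P hP) s :=
  hab.of_one_le (one_le_locAtM P hP)

/-- if `⋆` is a.b. on `D`, then the induced operation `⋆_P` (the same map,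
restricted to nonzero `D_P`-submodules of `K`) is a.b. on `D_P`. -/
theorem stmt2 (P : Ideal D) (hP : P.IsPrime) (s : Submodule D K → Submodule D K)
    (hs : IsSemistar (1 : Submodule D K) s) (hab : IsAB (1 : Submodule D K) s) :
    IsAB (locAtM D K P hP) s :=
  stmt2_general P hP s hab
end

section
/- Let D be an integral domain, P a prime ideal of D, and Q a prime ideal of D with P ∩ Q not containing any nonzero prime ideal of D. Then the compositum D_P · D_Q (the subring of K generated by D_P and D_Q) equals the quotient field K of D. -/
open Pointwise

variable {D : Type*} [CommRing D] [IsDomain D]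
variable {K : Type*} [Field K] [Algebra D K] [IsFractionRing D K]

/-! If `A = D_P · D_Q` were not `K`, some nonzero `d ∈ D` would be a nonunit of `A`. A maximal ideal
of `A` containing `d` contracts to a nonzero prime of `D`, and this prime lies in `P ∩ Q` because
every element of `D` outside `P` (or `Q`) is already invertible in `D_P ⊆ A` (or `D_Q ⊆ A`). -/

theorem Subalgebra.eq_top_of_isUnit_algebraMap {R F : Type*} [CommRing R] [Field F] [Algebra R F]
    [IsFractionRing R F] {A : Subalgebra R F}
    (h : ∀ r ∈ nonZeroDivisors R, IsUnit (algebraMap R A r)) : A = ⊤ := by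
  rw [eq_top_iff]
  rintro x -
  obtain ⟨a, b, hb, rfl⟩ := IsFractionRing.div_surjective (A := R) x
  rw [div_eq_mul_inv]
  exact A.mul_mem (A.algebraMap_mem a)
    (Submonoid.inv_mem_of_isUnit (h b hb))

theorem isUnit_algebraMap_locAt {R : Ideal D} (hR : R.IsPrime) {s : D} (hs : s ∉ R) :
    IsUnit (algebraMap D (locAt D K R hR) s) :=
  have : IsLocalization R.primeCompl (locAt D K R hR) :=
    Localization.subalgebra.isLocalization_subalgebra _ _ _
  IsLocalization.map_units _ (⟨s, hs⟩ : R.primeCompl)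

theorem Ideal.comap_le_of_locAt_le {A : Subalgebra D K} {R : Ideal D} (hR : R.IsPrime)
    (hRA : locAt D K R hR ≤ A) {N : Ideal A} (hN : N ≠ ⊤) :
    N.comap (algebraMap D A) ≤ R := by
  intro s hsN
  by_contra hsR
  have hunit : IsUnit (algebraMap D A s) := by
    simpa only [AlgHom.commutes] using
      (isUnit_algebraMap_locAt hR hsR).map (Subalgebra.inclusion hRA)
  exact hN (N.eq_top_of_isUnit_mem hsN hunit)

/-- if `P ∩ Q` contains no nonzero prime ideal, then the compositum
`D_P · D_Q` is the whole quotient field `K`. -/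
theorem stmt7 (P Q : Ideal D) (hP : P.IsPrime) (hQ : Q.IsPrime)
    (h : ∀ H : Ideal D, H.IsPrime → H ≤ P ⊓ Q → H = ⊥) :
    locAt D K P hP ⊔ locAt D K Q hQ = (⊤ : Subalgebra D K) := by
  refine Subalgebra.eq_top_of_isUnit_algebraMap fun d hd => ?_
  by_contra hd_nonunit
  obtain ⟨M, hM, hdM⟩ := exists_max_ideal_of_mem_nonunits hd_nonunit
  have hMP := Ideal.comap_le_of_locAt_le hP le_sup_left hM.ne_top
  have hMQ := Ideal.comap_le_of_locAt_le hQ le_sup_right hM.ne_top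
  have hM_bot := h _ (hM.isPrime.comap _) (le_inf hMP hMQ)
  have hd_mem : d ∈ M.comap (algebraMap D _) := hdM
  exact nonZeroDivisors.ne_zero hd (by rwa [hM_bot, Ideal.mem_bot] at hd_mem)
end

section
/- Let D be an integral domain with quotient field K, and let P, Q be prime ideals of D. Then the compositum D_P · D_Q inside K equals the intersection ∩{D_H | H ∈ Spec(D), H ⊆ P ∩ Q}. -/
open Pointwise

variable {D : Type*} [CommRing D] [IsDomain D]
variable {K : Type*} [Field K] [Algebra D K] [IsFractionRing D K]


lemma mem_locAt (P : Ideal D) (hP : P.IsPrime) (x : K) :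
    x ∈ locAt D K P hP ↔ ∃ a s : D, s ∉ P ∧ x * algebraMap D K s = algebraMap D K a := by
  unfold locAt Localization.subalgebra
  rw [← SetLike.mem_coe, Subalgebra.coe_copy]
  constructor
  · rintro ⟨a, s, hs, rfl⟩
    exact ⟨a, s, hs, IsLocalization.mk'_spec K a _⟩
  · rintro ⟨a, s, hs, h⟩
    refine ⟨a, s, hs, ?_⟩
    rw [IsLocalization.eq_mk'_iff_mul_eq]
    exact h

/-- the compositum `D_P · D_Q` equals the intersection of the localizations
`D_H` over the primes `H ⊆ P ∩ Q`. -/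
theorem stmt8 (P Q : Ideal D) (hP : P.IsPrime) (hQ : Q.IsPrime) :
    locAt D K P hP ⊔ locAt D K Q hQ =
      sInf {A : Subalgebra D K |
        ∃ (H : Ideal D) (hH : H.IsPrime), H ≤ P ⊓ Q ∧ A = locAt D K H hH} := by
  
  have hsD : ∀ (s : D), s ≠ 0 → algebraMap D K s ≠ 0 := fun s hs =>
    IsFractionRing.to_map_ne_zero_of_mem_nonZeroDivisors (mem_nonZeroDivisors_of_ne_zero hs)
  apply le_antisymm
  · apply sup_le <;> (apply le_sInf; rintro A ⟨H, hH, hle, rfl⟩; intro x hx)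
    · rw [mem_locAt] at hx ⊢
      obtain ⟨a, s, hs, hxs⟩ := hx
      exact ⟨a, s, fun h => hs ((hle h).1), hxs⟩
    · rw [mem_locAt] at hx ⊢
      obtain ⟨a, s, hs, hxs⟩ := hx
      exact ⟨a, s, fun h => hs ((hle h).2), hxs⟩
  · intro x hx
    -- the multiplicative set of products s*t with s ∉ P, t ∉ Q
    have h1P : (1 : D) ∉ P := fun h => hP.ne_top (Ideal.eq_top_of_unit_mem P 1 1 h (mul_one 1))
    have h1Q : (1 : D) ∉ Q := fun h => hQ.ne_top (Ideal.eq_top_of_unit_mem Q 1 1 h (mul_one 1))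
    set S : Submonoid D :=
      { carrier := {d | ∃ s t : D, s ∉ P ∧ t ∉ Q ∧ d = s * t}
        one_mem' := ⟨1, 1, h1P, h1Q, (one_mul 1).symm⟩
        mul_mem' := by
          rintro a b ⟨s, t, hs, ht, rfl⟩ ⟨s', t', hs', ht', rfl⟩
          refine ⟨s * s', t * t', fun h => ?_, fun h => ?_, by ring⟩
          · rcases hP.mem_or_mem h with h | h
            exacts [hs h, hs' h]
          · rcases hQ.mem_or_mem h with h | h
            exacts [ht h, ht' h] } with hSdef
    set I : Ideal D :=
      { carrier := {d | ∃ a : D, x * algebraMap D K d = algebraMap D K a}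
        zero_mem' := ⟨0, by simp⟩
        add_mem' := by
          rintro a b ⟨u, hu⟩ ⟨v, hv⟩
          exact ⟨u + v, by rw [map_add, map_add, mul_add, hu, hv]⟩
        smul_mem' := by
          rintro c d ⟨u, hu⟩
          refine ⟨c * u, ?_⟩
          simp only [smul_eq_mul, map_mul]
          rw [mul_left_comm, hu, mul_comm] } with hIdef
    have hdisj : ¬ Disjoint (I : Set D) (S : Set D) := by
      intro hd
      obtain ⟨H, hH, hIH, hHS⟩ := Ideal.exists_le_prime_disjoint I S hd
      have hHP : H ≤ P := by
        intro d hd'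
        by_contra hdP
        exact Set.disjoint_left.mp hHS hd' ⟨d, 1, hdP, h1Q, (mul_one d).symm⟩
      have hHQ : H ≤ Q := by
        intro d hd'
        by_contra hdQ
        exact Set.disjoint_left.mp hHS hd' ⟨1, d, h1P, hdQ, (one_mul d).symm⟩
      have hmem : locAt D K H hH ∈ {A : Subalgebra D K |
          ∃ (H : Ideal D) (hH : H.IsPrime), H ≤ P ⊓ Q ∧ A = locAt D K H hH} :=
        ⟨H, hH, le_inf hHP hHQ, rfl⟩
      have hxH : x ∈ locAt D K H hH := sInf_le hmem hx
      rw [mem_locAt] at hxH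
      obtain ⟨a, s, hs, hxs⟩ := hxH
      exact hs (hIH ⟨a, hxs⟩)
    rw [Set.not_disjoint_iff] at hdisj
    obtain ⟨d, hdI, s, t, hs, ht, rfl⟩ := hdisj
    obtain ⟨a, ha⟩ := hdI
    have hs0 : s ≠ 0 := fun h => hs (h ▸ P.zero_mem)
    have ht0 : t ≠ 0 := fun h => ht (h ▸ Q.zero_mem)
    have hS0 := hsD s hs0
    have hT0 := hsD t ht0
    have hxeq : x = (algebraMap D K a * (algebraMap D K s)⁻¹) * (algebraMap D K t)⁻¹ := by
      rw [← ha, map_mul]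
      field_simp
    rw [hxeq]
    have hmemP : algebraMap D K a * (algebraMap D K s)⁻¹ ∈ locAt D K P hP := by
      rw [mem_locAt]
      exact ⟨a, s, hs, by rw [mul_assoc, inv_mul_cancel₀ hS0, mul_one]⟩
    have hmemQ : (algebraMap D K t)⁻¹ ∈ locAt D K Q hQ := by
      rw [mem_locAt]
      exact ⟨1, t, ht, by rw [inv_mul_cancel₀ hT0, map_one]⟩
    exact mul_mem (le_sup_left (α := Subalgebra D K) hmemP)
      (le_sup_right (α := Subalgebra D K) hmemQ)
end

section
/- Let D be an integral domain. For every nonzero finitely generated fractional ideal F of D and every prime ideal P of D, we have (F D_P)^{v_{D_P}} = (F^{v_D} D_P)^{v_{D_P}}, where v_R(E) := (R : (R : E)). -/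
open Pointwise

variable {D : Type*} [CommRing D] [IsDomain D]
variable {K : Type*} [Field K] [Algebra D K] [IsFractionRing D K]

/-! Over `R = D_P` one has `R : (E R) = R : E`, so it suffices to show `R : F = R : F^{v_D}`.
If `x F ⊆ R` with `F` finitely generated, clearing denominators of the finitely many `x f_i`
gives `s ∉ P` with `s x ∈ D : F = D : F^{v_D}`; hence `x F^{v_D} ⊆ s⁻¹ D ⊆ R`. -/

namespace Submodule

variable {R A : Type*} [CommSemiring R] [CommSemiring A] [Algebra R A]

theorem div_le_div_left {I J J' : Submodule R A} (h : J ≤ J') : I / J' ≤ I / J :=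
  le_div_iff_mul_le.mpr <| (mul_le_mul' le_rfl h).trans (le_div_iff_mul_le.mp le_rfl)

theorem le_one_div_one_div (I : Submodule R A) : I ≤ 1 / (1 / I) :=
  le_div_iff_mul_le.mpr mul_one_div_le_one

end Submodule

theorem Subalgebra.toSubmodule_div_mul_toSubmodule {R A : Type*} [CommSemiring R]
    [CommSemiring A] [Algebra R A] (B : Subalgebra R A) (E : Submodule R A) :
    toSubmodule B / (E * toSubmodule B) = toSubmodule B / E := by
  set M := toSubmodule B
  have hMM : M * M = M := by rw [mul_toSubmodule, sup_idem]
  refine le_antisymm (Submodule.div_le_div_left ?_) (Submodule.le_div_iff_mul_le.mpr ?_)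
  · simpa using mul_le_mul' (le_refl E) (Submodule.one_le.mpr B.one_mem)
  · calc M / E * (E * M) = M / E * E * M := (mul_assoc _ _ _).symm
      _ ≤ M * M := mul_le_mul' (Submodule.le_div_iff_mul_le.mp le_rfl) le_rfl
      _ = M := hMM

section LocalizationSubalgebra

variable {A L : Type*} [CommRing A] [Field L] [Algebra A L] [IsFractionRing A L]
  {S : Submonoid A} (hS : S ≤ nonZeroDivisors A)

theorem exists_mul_mem_one_div_of_mem_subalgebra_div {F : Submodule A L} (hF : F.FG) {x : L}
    (hx : x ∈ Subalgebra.toSubmodule (Localization.subalgebra L S hS) / F) :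
    ∃ s ∈ S, algebraMap A L s * x ∈ (1 : Submodule A L) / F := by
  obtain ⟨T, rfl⟩ := hF
  obtain ⟨s, hs⟩ := IsLocalization.exist_integer_multiples S T.attach
    fun y => (⟨x * y, hx y (Submodule.subset_span y.2)⟩ : Localization.subalgebra L S hS)
  refine ⟨s, s.2, fun z hz => ?_⟩
  refine (Submodule.span_le (p := (1 : Submodule A L).comap
    (LinearMap.mulLeft A (algebraMap A L s * x)))).mpr (fun y hy => ?_) hz
  obtain ⟨a, ha⟩ := hs ⟨y, hy⟩ (Finset.mem_attach _ _)
  refine ⟨a, ?_⟩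
  simpa [Algebra.smul_def, mul_assoc] using congrArg Subtype.val ha

theorem subalgebra_div_vOp_one {F : Submodule A L} (hF : F.FG) :
    Subalgebra.toSubmodule (Localization.subalgebra L S hS) / vOp 1 F =
      Subalgebra.toSubmodule (Localization.subalgebra L S hS) / F := by
  refine le_antisymm (Submodule.div_le_div_left (Submodule.le_one_div_one_div F)) fun x hx => ?_
  obtain ⟨s, hs, hsx⟩ := exists_mul_mem_one_div_of_mem_subalgebra_div hS hF hx
  intro z hz
  obtain ⟨a, ha⟩ := hz _ hsx
  have ha' : algebraMap A L a = z * (algebraMap A L s * x) := by simpa [Algebra.smul_def] using ha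
  refine ⟨a, s, hs, IsLocalization.eq_mk'_iff_mul_eq.mpr ?_⟩
  rw [ha']
  ring

end LocalizationSubalgebra

theorem stmt10_general (F : Submodule D K) (hFG : F.FG) (P : Ideal D) (hP : P.IsPrime) :
    vOp (locAtM D K P hP) (F * locAtM D K P hP) =
      vOp (locAtM D K P hP) (vOp 1 F * locAtM D K P hP) := by
  rw [vOp, vOp, locAtM, locAt, Subalgebra.toSubmodule_div_mul_toSubmodule,
    Subalgebra.toSubmodule_div_mul_toSubmodule, subalgebra_div_vOp_one _ hFG]

/-- `(F D_P)^{v_{D_P}} = (F^{v_D} D_P)^{v_{D_P}}` for every nonzero finitely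
generated fractional ideal `F` and every prime `P`. -/
theorem stmt10 (F : Submodule D K) (hFG : F.FG) (hF : F ≠ ⊥) (P : Ideal D) (hP : P.IsPrime) :
    vOp (locAtM D K P hP) (F * locAtM D K P hP) =
      vOp (locAtM D K P hP) (vOp 1 F * locAtM D K P hP) :=
  stmt10_general F hFG P hP
end

section
/- Let D be an integral domain and P a prime ideal of D. Then P is a t_D-prime ideal of D (i.e. P^{t_D} = P) if and only if (P D_P)^{t_P} = P D_P, where t_P is the semistar operation on D_P defined by E^{t_P} := E^{t_D} = ∪{(D : (D : F)) | F ⊆ E, F a nonzero finitely generated D-submodule of K}. -/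
open Pointwise

variable {D : Type*} [CommRing D] [IsDomain D]
variable {K : Type*} [Field K] [Algebra D K] [IsFractionRing D K]

/-!
An element `x` lies in `P D_P` iff `s x ∈ P` for some `s ∉ P`, and a single such `s` serves for a
whole finitely generated `F ⊆ P D_P`. Since `s F^v ⊆ (s F)^v`, if `P` is a `t`-ideal then
`s F^v ⊆ P`, whence `F^v ⊆ P D_P`. Conversely, for a finitely generated `F ⊆ P`, `F^v` lies in
`D` and, by hypothesis, in `P D_P`, and `D ∩ P D_P = P`.
-/

open Submodule

theorem smul_ne_bot {R M : Type*} [CommSemiring R] [IsCancelMulZero R] [AddCommMonoid M]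
    [Module R M] [Module.IsTorsionFree R M] {r : R} (hr : r ≠ 0) {F : Submodule R M} (hF : F ≠ ⊥) :
    r • F ≠ ⊥ := by
  obtain ⟨x, hx, hx0⟩ := F.ne_bot_iff.1 hF
  exact (r • F).ne_bot_iff.2 ⟨r • x, smul_mem_pointwise_smul x r F hx, smul_ne_zero hr hx0⟩

theorem exists_mem_colon_of_fg {R M : Type*} [CommSemiring R] [AddCommMonoid M] [Module R M]
    {S : Submonoid R} {N L F : Submodule R M} (h : ∀ x ∈ L, ∃ s ∈ S, s • x ∈ N)
    (hF : F.FG) (hFL : F ≤ L) : ∃ s ∈ S, s ∈ N.colon F := by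
  classical
  obtain ⟨T, rfl⟩ := hF
  rw [colon_span]
  induction T using Finset.induction with
  | empty => exact ⟨1, S.one_mem, by simp⟩
  | insert x T _ ih =>
    obtain ⟨s, hs, hsx⟩ := h x (hFL (subset_span (by simp)))
    obtain ⟨t, ht, htT⟩ := ih ((span_mono (by simp)).trans hFL)
    refine ⟨s * t, S.mul_mem hs ht, ?_⟩
    rw [Finset.coe_insert, Set.insert_eq, colon_union]
    exact ⟨Ideal.mul_mem_right _ _ (mem_colon_singleton.2 hsx), Ideal.mul_mem_left _ _ htT⟩

theorem map_algebraLinearMap_le_one {R A : Type*} [CommSemiring R] [Semiring A] [Algebra R A]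
    (I : Ideal R) : map (Algebra.linearMap R A) I ≤ 1 := by
  rw [one_eq_range]
  exact LinearMap.map_le_range

section

variable {R L : Type*} [CommRing R] [Field L] [Algebra R L]

theorem le_vOp (Rm F : Submodule R L) : F ≤ vOp Rm F := fun x hx _ hy => by
  rw [mul_comm]
  exact hy x hx

theorem vOp_le_of_le {Rm F : Submodule R L} (hF : F ≤ Rm) : vOp Rm F ≤ Rm := fun x hx => by
  simpa using hx 1 (one_mem_div.2 hF)

theorem smul_vOp_le (r : R) (Rm F : Submodule R L) : r • vOp Rm F ≤ vOp Rm (r • F) := by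
  intro z hz y hy
  obtain ⟨x, hx, rfl⟩ := (mem_smul_pointwise_iff_exists _ _ _).1 hz
  have hry : r • y ∈ Rm / F := fun f hf => by
    rw [smul_mul_assoc, ← mul_smul_comm]
    exact hy _ (smul_mem_pointwise_smul f r F hf)
  rw [smul_mul_assoc, ← mul_smul_comm]
  exact hx _ hry

theorem isRFG_one_iff {F : Submodule R L} : IsRFG 1 F ↔ F.FG ∧ F ≠ ⊥ := by
  simp only [IsRFG, mul_one]
  exact ⟨fun ⟨_, hF, hF0, hFeq⟩ => hFeq ▸ ⟨hF, hF0⟩, fun ⟨hF, hF0⟩ => ⟨F, hF, hF0, rfl⟩⟩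

theorem vOp_le_tOp_one {E F : Submodule R L} (hF : F.FG) (hF0 : F ≠ ⊥) (hFE : F ≤ E) :
    vOp 1 F ≤ tOp 1 E :=
  le_sSup ⟨F, isRFG_one_iff.2 ⟨hF, hF0⟩, hFE, rfl⟩

theorem tOp_one_le {E X : Submodule R L}
    (h : ∀ F : Submodule R L, F.FG → F ≠ ⊥ → F ≤ E → vOp 1 F ≤ X) : tOp 1 E ≤ X := by
  refine sSup_le ?_
  rintro _ ⟨F, hF, hFE, rfl⟩
  exact h F (isRFG_one_iff.1 hF).1 (isRFG_one_iff.1 hF).2 hFE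

theorem le_tOp_one (E : Submodule R L) : E ≤ tOp 1 E := by
  intro x hx
  rcases eq_or_ne x 0 with rfl | hx0
  · exact zero_mem _
  refine vOp_le_tOp_one (fg_span_singleton x) ?_ ((span_singleton_le_iff_mem x E).2 hx)
    (le_vOp 1 _ (mem_span_singleton_self x))
  simpa [span_singleton_eq_bot] using hx0

end

section Localization

variable (P : Ideal D) (hP : P.IsPrime)

theorem exists_smul_eq_algebraMap_of_mem_locAtM {x : K} (hx : x ∈ locAtM D K P hP) :
    ∃ s ∈ P.primeCompl, ∃ a : D, s • x = algebraMap D K a := by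
  obtain ⟨a, s, hs, rfl⟩ := hx
  exact ⟨s, hs, a, by rw [Algebra.smul_def, mul_comm]; exact IsLocalization.mk'_spec K a _⟩

theorem inv_algebraMap_mem_locAtM {s : D} (hs : s ∈ P.primeCompl) :
    (algebraMap D K s)⁻¹ ∈ locAtM D K P hP :=
  ⟨1, s, hs, by rw [IsFractionRing.mk'_eq_div, map_one, one_div]⟩

theorem map_le_map_mul_locAtM :
    map (Algebra.linearMap D K) P ≤ map (Algebra.linearMap D K) P * locAtM D K P hP :=
  le_mul_of_one_le_right' (one_le.2 (Subalgebra.one_mem _))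

theorem mem_map_mul_locAtM_iff {x : K} :
    x ∈ map (Algebra.linearMap D K) P * locAtM D K P hP ↔
      ∃ s ∈ P.primeCompl, s • x ∈ map (Algebra.linearMap D K) P := by
  refine ⟨fun hx => ?_, fun ⟨s, hs, hsx⟩ => ?_⟩
  · refine Submodule.mul_induction_on hx (fun p hp u hu => ?_)
      fun x y ⟨s, hs, hsx⟩ ⟨t, ht, hty⟩ => ?_
    · obtain ⟨s, hs, a, hsu⟩ := exists_smul_eq_algebraMap_of_mem_locAtM P hP hu
      refine ⟨s, hs, ?_⟩
      rw [← mul_smul_comm, hsu, mul_comm, ← Algebra.smul_def]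
      exact smul_mem _ a hp
    · refine ⟨t * s, P.primeCompl.mul_mem ht hs, ?_⟩
      rw [smul_add, mul_smul, mul_comm, mul_smul]
      exact add_mem (smul_mem _ t hsx) (smul_mem _ s hty)
  · have hs0 : algebraMap D K s ≠ 0 :=
      IsFractionRing.to_map_ne_zero_of_mem_nonZeroDivisors (P.primeCompl_le_nonZeroDivisors hs)
    rw [show x = s • x * (algebraMap D K s)⁻¹ by
      rw [Algebra.smul_def, mul_right_comm, mul_inv_cancel₀ hs0, one_mul]]
    exact mul_mem_mul hsx (inv_algebraMap_mem_locAtM P hP hs)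

theorem one_inf_map_mul_locAtM :
    1 ⊓ (map (Algebra.linearMap D K) P * locAtM D K P hP) = map (Algebra.linearMap D K) P := by
  refine le_antisymm ?_ (le_inf (map_algebraLinearMap_le_one P) (map_le_map_mul_locAtM P hP))
  rintro x ⟨hx1, hxL⟩
  obtain ⟨d, rfl⟩ := mem_one.1 hx1
  obtain ⟨s, hs, p, hp, hps⟩ := (mem_map_mul_locAtM_iff P hP).1 hxL
  rw [Algebra.linearMap_apply, ← algebraMap_smul K s, smul_eq_mul, ← map_mul] at hps
  rw [IsFractionRing.injective D K hps] at hp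
  exact mem_map_of_mem ((hP.mem_or_mem hp).resolve_left hs)

theorem tOp_one_map_mul_locAtM_le (h : tOp 1 (map (Algebra.linearMap D K) P) ≤
      map (Algebra.linearMap D K) P) :
    tOp 1 (map (Algebra.linearMap D K) P * locAtM D K P hP) ≤
      map (Algebra.linearMap D K) P * locAtM D K P hP := by
  refine tOp_one_le fun F hF hF0 hFL => ?_
  obtain ⟨s, hs, hsF⟩ :=
    exists_mem_colon_of_fg (fun _ hx => (mem_map_mul_locAtM_iff P hP).1 hx) hF hFL
  have hsF0 : s • F ≠ ⊥ :=
    smul_ne_bot (nonZeroDivisors.ne_zero (P.primeCompl_le_nonZeroDivisors hs)) hF0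
  have hsvF : s • vOp 1 F ≤ map (Algebra.linearMap D K) P :=
    (smul_vOp_le s 1 F).trans <|
      (vOp_le_tOp_one (hF.map _) hsF0 (mem_colon_iff_le.1 hsF)).trans h
  exact fun x hx =>
    (mem_map_mul_locAtM_iff P hP).2 ⟨s, hs, hsvF (smul_mem_pointwise_smul x s _ hx)⟩

theorem tOp_one_map_le (h : tOp 1 (map (Algebra.linearMap D K) P * locAtM D K P hP) ≤
      map (Algebra.linearMap D K) P * locAtM D K P hP) :
    tOp 1 (map (Algebra.linearMap D K) P) ≤ map (Algebra.linearMap D K) P := by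
  refine tOp_one_le fun F hF hF0 hFP => ?_
  rw [← one_inf_map_mul_locAtM P hP]
  exact le_inf (vOp_le_of_le (hFP.trans (map_algebraLinearMap_le_one P)))
    ((vOp_le_tOp_one hF hF0 (hFP.trans (map_le_map_mul_locAtM P hP))).trans h)

end Localization

/-- `P` is a `t_D`-prime iff `(P D_P)^{t_P} = P D_P`, where `t_P` is the
semistar operation on `D_P` given by `E ↦ E^{t_D}`. -/
theorem stmt11 (P : Ideal D) (hP : P.IsPrime) :
    tOp 1 (Submodule.map (Algebra.linearMap D K) P) = Submodule.map (Algebra.linearMap D K) P ↔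
      tOp 1 (Submodule.map (Algebra.linearMap D K) P * locAtM D K P hP) =
        Submodule.map (Algebra.linearMap D K) P * locAtM D K P hP :=
  ⟨fun h => (tOp_one_map_mul_locAtM_le P hP h.le).antisymm (le_tOp_one _),
    fun h => (tOp_one_map_le P hP h.le).antisymm (le_tOp_one _)⟩
end

section
/- Let D be an integral domain and let P ⊆ Q be prime ideals of D. If the extension P D_Q is a t_{D_Q}-ideal of D_Q (i.e. (P D_Q)^{t_{D_Q}} = P D_Q), then P is a t_D-ideal of D (i.e. P^{t_D} = P). -/
/-!
A finitely generated `F ⊆ P` has `F^{v_D} ⊆ (F D_Q)^{v_{D_Q}}`: if `y F ⊆ D_Q`, a single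
`s ∉ Q` clears the denominators of the finitely many generators of `y F`, so `s y ∈ (D : F)`.
Hence `F^{v_D} ⊆ (P D_Q)^{t_{D_Q}} ∩ D = P D_Q ∩ D = P`, the last step as `P ⊆ Q` is prime.
-/

open Pointwise

namespace Submodule

variable {D K : Type*} [CommRing D] [Field K] [Algebra D K]

theorem le_vOp (Rm E : Submodule D K) : E ≤ vOp Rm E := fun x hx =>
  mem_div_iff_forall_mul_mem.mpr fun _ hy => mul_comm x _ ▸ mem_div_iff_forall_mul_mem.mp hy x hx

theorem vOp_one_le_one {F : Submodule D K} (hF : F ≤ 1) : vOp 1 F ≤ 1 := by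
  intro x hx
  have hone : (1 : K) ∈ 1 / F :=
    mem_div_iff_forall_mul_mem.mpr fun z hz => (one_mul z).symm ▸ hF hz
  simpa using mem_div_iff_forall_mul_mem.mp hx 1 hone

theorem vOp_le_tOp {Rm F E : Submodule D K} (hF : IsRFG Rm F) (hFE : F ≤ E) :
    vOp Rm F ≤ tOp Rm E :=
  le_sSup ⟨F, hF, hFE, rfl⟩

theorem tOp_le {Rm E G : Submodule D K} (h : ∀ F, IsRFG Rm F → F ≤ E → vOp Rm F ≤ G) :
    tOp Rm E ≤ G :=
  sSup_le fun _ ⟨F, hF, hFE, hG⟩ => hG ▸ h F hF hFE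

theorem le_tOp_one (E : Submodule D K) : E ≤ tOp 1 E := by
  intro x hx
  obtain rfl | hx0 := eq_or_ne x 0
  · exact zero_mem _
  have hF : IsRFG 1 (span D {x}) :=
    ⟨span D {x}, fg_span_singleton x, by simpa using hx0, (mul_one _).symm⟩
  exact vOp_le_tOp hF ((span_singleton_le_iff_mem x E).mpr hx)
    (le_vOp 1 _ (mem_span_singleton_self x))

end Submodule

namespace Localization

open Submodule

variable {D K : Type*} [CommRing D] [Field K] [Algebra D K] [IsFractionRing D K]
  {S : Submonoid D} (hS : S ≤ nonZeroDivisors D)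

theorem mem_subalgebra_iff {x : K} :
    x ∈ subalgebra K S hS ↔ ∃ s ∈ S, ∃ a, x * algebraMap D K s = algebraMap D K a := by
  constructor
  · rintro ⟨a, s, hs, rfl⟩
    exact ⟨s, hs, a, IsLocalization.eq_mk'_iff_mul_eq.mp rfl⟩
  · rintro ⟨s, hs, a, hx⟩
    exact ⟨a, s, hs, IsLocalization.eq_mk'_iff_mul_eq.mpr hx⟩

theorem exists_smul_mem_one_of_fg_le_subalgebra {F : Submodule D K} (hF : F.FG)
    (hFS : F ≤ Subalgebra.toSubmodule (subalgebra K S hS)) :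
    ∃ s ∈ S, ∀ z ∈ F, s • z ∈ (1 : Submodule D K) := by
  induction F, hF using Submodule.fg_induction with
  | singleton w =>
    obtain ⟨s, hs, a, ha⟩ := (mem_subalgebra_iff hS).mp (hFS (mem_span_singleton_self w))
    refine ⟨s, hs, fun z hz => ?_⟩
    obtain ⟨d, rfl⟩ := mem_span_singleton.mp hz
    rw [smul_comm, Algebra.smul_def s w, mul_comm, ha]
    exact smul_mem _ d (algebraMap_mem a)
  | sup N₁ N₂ _ _ ih₁ ih₂ =>
    obtain ⟨s₁, hs₁, h₁⟩ := ih₁ (le_sup_left.trans hFS)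
    obtain ⟨s₂, hs₂, h₂⟩ := ih₂ (le_sup_right.trans hFS)
    refine ⟨s₁ * s₂, S.mul_mem hs₁ hs₂, fun z hz => ?_⟩
    obtain ⟨z₁, hz₁, z₂, hz₂, rfl⟩ := mem_sup.mp hz
    rw [smul_add, mul_smul, smul_comm s₁ s₂, mul_smul]
    exact add_mem (smul_mem _ s₂ (h₁ z₁ hz₁)) (smul_mem _ s₁ (h₂ z₂ hz₂))

theorem vOp_one_le_vOp_subalgebra {F : Submodule D K} (hF : F.FG) :
    vOp 1 F ≤ vOp (Subalgebra.toSubmodule (subalgebra K S hS))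
      (F * Subalgebra.toSubmodule (subalgebra K S hS)) := by
  set DS := Subalgebra.toSubmodule (subalgebra K S hS)
  intro x hx
  refine mem_div_iff_forall_mul_mem.mpr fun y hy => ?_
  have hyF : F.map (LinearMap.mulLeft D y) ≤ DS := by
    rintro _ ⟨z, hz, rfl⟩
    have hz' : z ∈ F * DS := by simpa using mul_mem_mul (N := DS) hz (subalgebra K S hS).one_mem
    simpa using mem_div_iff_forall_mul_mem.mp hy z hz'
  obtain ⟨s, hs, hsF⟩ := exists_smul_mem_one_of_fg_le_subalgebra hS (hF.map _) hyF
  have hsy : s • y ∈ 1 / F := mem_div_iff_forall_mul_mem.mpr fun z hz => by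
    simpa [smul_mul_assoc] using hsF _ ⟨z, hz, rfl⟩
  obtain ⟨a, ha⟩ := mem_one.mp (mem_div_iff_forall_mul_mem.mp hx _ hsy)
  refine (mem_subalgebra_iff hS).mpr ⟨s, hs, a, ?_⟩
  rw [ha, Algebra.smul_def]
  ring

theorem exists_mul_eq_of_mem_map_mul_subalgebra {P : Ideal D} {x : K}
    (hx : x ∈ Submodule.map (Algebra.linearMap D K) P *
      Subalgebra.toSubmodule (subalgebra K S hS)) :
    ∃ s ∈ S, ∃ p ∈ P, x * algebraMap D K s = algebraMap D K p := by
  refine Submodule.mul_induction_on hx ?_ ?_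
  · rintro _ ⟨p, hp, rfl⟩ n hn
    obtain ⟨s, hs, a, ha⟩ := (mem_subalgebra_iff hS).mp hn
    refine ⟨s, hs, p * a, P.mul_mem_right a hp, ?_⟩
    rw [Algebra.linearMap_apply, mul_assoc, ha, map_mul]
  · rintro x₁ x₂ ⟨s₁, hs₁, p₁, hp₁, e₁⟩ ⟨s₂, hs₂, p₂, hp₂, e₂⟩
    refine ⟨s₁ * s₂, S.mul_mem hs₁ hs₂, p₁ * s₂ + p₂ * s₁,
      P.add_mem (P.mul_mem_right s₂ hp₁) (P.mul_mem_right s₁ hp₂), ?_⟩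
    simp only [map_mul, map_add]
    linear_combination algebraMap D K s₂ * e₁ + algebraMap D K s₁ * e₂

theorem map_mul_subalgebra_inf_one_le {P : Ideal D} (hP : P.IsPrime)
    (hPS : Disjoint (S : Set D) P) :
    Submodule.map (Algebra.linearMap D K) P * Subalgebra.toSubmodule (subalgebra K S hS) ⊓ 1 ≤
      Submodule.map (Algebra.linearMap D K) P := by
  rintro x ⟨hxPS, hx1⟩
  obtain ⟨s, hs, p, hp, hxs⟩ := exists_mul_eq_of_mem_map_mul_subalgebra hS hxPS
  obtain ⟨d, rfl⟩ := mem_one.mp hx1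
  have hds : d * s = p := IsFractionRing.injective D K (by rw [map_mul, hxs])
  exact ⟨d, (hP.mem_or_mem (hds ▸ hp)).resolve_right (Set.disjoint_left.mp hPS hs), rfl⟩

end Localization

variable {D : Type*} [CommRing D] [IsDomain D]
variable {K : Type*} [Field K] [Algebra D K] [IsFractionRing D K]

/-- if `P ⊆ Q` are primes and `P D_Q` is a `t_{D_Q}`-ideal of `D_Q`, then `P`
is a `t_D`-ideal of `D`. -/
theorem stmt12 (P Q : Ideal D) (hP : P.IsPrime) (hQ : Q.IsPrime) (hPQ : P ≤ Q)
    (h : tOp (locAtM D K Q hQ) (Submodule.map (Algebra.linearMap D K) P * locAtM D K Q hQ) =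
      Submodule.map (Algebra.linearMap D K) P * locAtM D K Q hQ) :
    tOp 1 (Submodule.map (Algebra.linearMap D K) P) = Submodule.map (Algebra.linearMap D K) P := by
  set DQ := locAtM D K Q hQ
  set P' := Submodule.map (Algebra.linearMap D K) P
  have hP'1 : P' ≤ 1 := Submodule.one_eq_range (R := D) (A := K) ▸ LinearMap.map_le_range
  have hdisj : Disjoint (Q.primeCompl : Set D) P :=
    Set.disjoint_left.mpr fun _ hs hsP => hs (hPQ hsP)
  refine le_antisymm (Submodule.tOp_le fun F ⟨F₀, hF₀, hF₀0, hF⟩ hFP => ?_)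
    (Submodule.le_tOp_one P')
  rw [hF, mul_one] at hFP ⊢
  calc vOp 1 F₀ ≤ vOp DQ (F₀ * DQ) ⊓ 1 :=
        le_inf (Localization.vOp_one_le_vOp_subalgebra _ hF₀)
          (Submodule.vOp_one_le_one (hFP.trans hP'1))
    _ ≤ P' * DQ ⊓ 1 :=
        inf_le_inf_right _
          (h ▸ Submodule.vOp_le_tOp ⟨F₀, hF₀, hF₀0, rfl⟩ (mul_le_mul_left hFP _))
    _ ≤ P' := Localization.map_mul_subalgebra_inf_one_le _ hP hdisj
end

section
/- Let D be an integral domain, Θ a nonempty subset of Spec(D), and for each P ∈ Θ let Δ_P ⊆ Spec(D_P) define the spectral semistar operation *_P on D_P. Then the semistar operation ∧_Θ on D defined by E^{∧_Θ} := ∩{(E D_P)^{*_P} | P ∈ Θ} is the spectral semistar operation defined by the set Δ := ∪{ {Q ∈ Spec(D) | Q D_P ∈ Δ_P} | P ∈ Θ }, i.e. E^{∧_Θ} = ∩{E D_Q | Q ∈ Δ} for every nonzero D-submodule E of K. -/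
open Pointwise

variable {D : Type*} [CommRing D] [IsDomain D]
variable {K : Type*} [Field K] [Algebra D K] [IsFractionRing D K]

section Localization

variable {P Q : Ideal D} (hP : P.IsPrime) (hQ : Q.IsPrime)

theorem locAt_mono (h : Q ≤ P) : locAt D K P hP ≤ locAt D K Q hQ := by
  rintro x ⟨a, s, hs, rfl⟩
  exact ⟨a, s, fun hsQ => hs (h hsQ), rfl⟩

theorem locAtM_mul_locAtM_of_le (h : Q ≤ P) :
    locAtM D K P hP * locAtM D K Q hQ = locAtM D K Q hQ := by
  rw [locAtM, locAtM, Subalgebra.mul_toSubmodule, sup_eq_right.2 (locAt_mono hP hQ h)]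

end Localization

theorem stmt15_general (Θ : Set (PrimeSpectrum D))
    (Δ : PrimeSpectrum D → Set (PrimeSpectrum D))
    (hΔ : ∀ P ∈ Θ, ∀ Q ∈ Δ P, Q.asIdeal ≤ P.asIdeal)
    (E : Submodule D K) :
    (⨅ P ∈ Θ, ⨅ Q ∈ Δ P,
        (E * locAtM D K P.asIdeal P.isPrime) * locAtM D K Q.asIdeal Q.isPrime) =
      ⨅ Q ∈ ⋃ P ∈ Θ, Δ P, E * locAtM D K Q.asIdeal Q.isPrime := by
  simp only [iInf_iUnion]
  refine iInf_congr fun P => iInf_congr fun hP => iInf_congr fun Q => iInf_congr fun hQ => ?_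
  rw [mul_assoc, locAtM_mul_locAtM_of_le _ _ (hΔ P hP Q hQ)]

/-- the wedge of a family of spectral semistar operations `*_P` (defined by
sets `Δ P` of primes contained in `P`, for `P ∈ Θ`) is the spectral semistar operation
defined by the union of the `Δ̇_P`. -/
theorem stmt15 (Θ : Set (PrimeSpectrum D)) (hne : Θ.Nonempty)
    (Δ : PrimeSpectrum D → Set (PrimeSpectrum D)) (hΔne : ∀ P ∈ Θ, (Δ P).Nonempty)
    (hΔ : ∀ P ∈ Θ, ∀ Q ∈ Δ P, Q.asIdeal ≤ P.asIdeal)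
    (E : Submodule D K) (hE : E ≠ ⊥) :
    (⨅ P ∈ Θ, ⨅ Q ∈ Δ P,
        (E * locAtM D K P.asIdeal P.isPrime) * locAtM D K Q.asIdeal Q.isPrime) =
      ⨅ Q ∈ ⋃ P ∈ Θ, Δ P, E * locAtM D K Q.asIdeal Q.isPrime :=
  stmt15_general Θ Δ hΔ E
end

section
/- Let D be an integral domain and Θ ⊆ Spec(D) nonempty. For each P ∈ Θ let *_P be a spectral semistar operation on D_P defined by Δ_P ⊆ Spec(D_P), and suppose the family satisfies condition (↓): for every pair P ≠ P' in Θ, every prime Q of D with Q D_{P'} ∈ Δ_{P'} and Q contained in some prime of P^↓ := {H | H ⊆ P} satisfies Q D_P ∈ Δ_P. If every *_P is a.b., then the semistar operation ∧ on D defined by E^∧ := ∩{(E D_P)^{*_P} | P ∈ Θ} is a.b. -/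
open Pointwise

variable {D : Type*} [CommRing D] [IsDomain D]
variable {K : Type*} [Field K] [Algebra D K] [IsFractionRing D K]

/-!
For `P ∈ Θ` write `c_P E := (E D_P)^{*_P}`, so that `E^∧ = ⋂_{P ∈ Θ} c_P E`. Each `c_P` is a
closure operator on the `D`-submodules of `K`, and `E ⊆ E^∧ ⊆ c_P E` gives `c_P (E^∧) = c_P E`.
Hence `(FG)^∧ ⊆ (FH)^∧` yields `((F D_P)(G D_P))^{*_P} ⊆ ((F D_P)(H D_P))^{*_P}` for every `P`,
the a.b. property of `*_P` (with `F D_P` finitely generated over `D_P`) gives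
`(G D_P)^{*_P} ⊆ (H D_P)^{*_P}`, and intersecting over `P ∈ Θ` gives `G^∧ ⊆ H^∧`.
-/

open Subalgebra (toSubmodule)

theorem ClosureOperator.apply_iInf₂_apply {α ι : Type*} [CompleteLattice α]
    (c : ι → ClosureOperator α) {Θ : Set ι} {i : ι} (hi : i ∈ Θ) (x : α) :
    c i (⨅ j ∈ Θ, c j x) = c i x :=
  le_antisymm ((c i).monotone (iInf₂_le i hi) |>.trans_eq ((c i).idempotent x))
    ((c i).monotone (le_iInf₂ fun j _ => (c j).le_closure x))

namespace Submodule

variable {R A : Type*} [CommSemiring R] [CommSemiring A] [Algebra R A]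

theorem le_mul_toSubmodule (E : Submodule R A) (S : Subalgebra R A) :
    E ≤ E * toSubmodule S :=
  le_mul_of_one_le_right' (one_le.mpr S.one_mem)

theorem mul_toSubmodule_mul_toSubmodule (E : Submodule R A) (S T : Subalgebra R A) :
    E * toSubmodule S * toSubmodule T * toSubmodule S * toSubmodule T =
      E * toSubmodule S * toSubmodule T := by
  calc E * toSubmodule S * toSubmodule T * toSubmodule S * toSubmodule T
      = E * (toSubmodule S * toSubmodule S) * (toSubmodule T * toSubmodule T) := by ring
    _ = E * toSubmodule S * toSubmodule T := by
      rw [S.isIdempotentElem_toSubmodule, T.isIdempotentElem_toSubmodule]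

/-- `E ↦ (E S)^⋆`, where `⋆` is the spectral operation on `S` defined by the overrings `T j`,
`j ∈ Δ`. -/
def spectralClosure {ι : Type*} (S : Subalgebra R A) (T : ι → Subalgebra R A) (Δ : Set ι) :
    ClosureOperator (Submodule R A) :=
  .mk' (fun E => ⨅ j ∈ Δ, E * toSubmodule S * toSubmodule (T j))
    (fun _ _ hEF => iInf₂_mono fun _ _ => by gcongr)
    (fun E => le_iInf₂ fun j _ =>
      (E.le_mul_toSubmodule S).trans ((E * toSubmodule S).le_mul_toSubmodule (T j)))
    (fun E => iInf₂_mono fun j hj => by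
      grw [iInf₂_le j hj, mul_toSubmodule_mul_toSubmodule])

end Submodule

open Submodule

section Fraction

variable {R A : Type*} [CommRing R] [Field A] [Algebra R A]

theorem IsRFG.mul_toSubmodule {F : Submodule R A} (hF : IsRFG 1 F) (S : Subalgebra R A) :
    IsRFG (toSubmodule S) (F * toSubmodule S) := by
  obtain ⟨F₀, hF₀, hF₀_ne, rfl⟩ := hF
  exact ⟨F₀, hF₀, hF₀_ne, by rw [mul_one]⟩

theorem isAB_iInf_spectralClosure {ι : Type*} (L : ι → Subalgebra R A) (Δ : ι → Set ι)
    (Θ : Set ι) (hab : ∀ i ∈ Θ, IsAB (toSubmodule (L i))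
      (fun E => ⨅ j ∈ Δ i, E * toSubmodule (L j))) :
    IsAB 1 (fun E => ⨅ i ∈ Θ, spectralClosure (L i) L (Δ i) E) := by
  intro F G H hF hG _ hH _ hFGH
  refine iInf₂_mono fun i hi => ?_
  set c := fun i => spectralClosure (L i) L (Δ i)
  have extend_ne_bot {X : Submodule R A} (hX : X ≠ ⊥) : X * toSubmodule (L i) ≠ ⊥ :=
    ne_bot_of_le_ne_bot hX (X.le_mul_toSubmodule (L i))
  have extend_stable (X : Submodule R A) :
      toSubmodule (L i) * (X * toSubmodule (L i)) ≤ X * toSubmodule (L i) := by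
    rw [mul_left_comm, (L i).isIdempotentElem_toSubmodule]
  have extend_mul (X : Submodule R A) : F * toSubmodule (L i) * (X * toSubmodule (L i)) =
      F * X * toSubmodule (L i) := by
    rw [mul_mul_mul_comm, (L i).isIdempotentElem_toSubmodule]
  refine hab i hi _ _ _ (hF.mul_toSubmodule (L i)) (extend_ne_bot hG) (extend_stable G)
    (extend_ne_bot hH) (extend_stable H) ?_
  have hc : c i (F * G) ≤ c i (F * H) :=
    calc c i (F * G) = c i (⨅ j ∈ Θ, c j (F * G)) :=
          (ClosureOperator.apply_iInf₂_apply c hi _).symm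
      _ ≤ c i (⨅ j ∈ Θ, c j (F * H)) := (c i).monotone hFGH
      _ = c i (F * H) := ClosureOperator.apply_iInf₂_apply c hi _
  rw [extend_mul, extend_mul]
  exact hc

end Fraction

theorem stmt16_general (Θ : Set (PrimeSpectrum D))
    (Δ : PrimeSpectrum D → Set (PrimeSpectrum D))
    (hab : ∀ P ∈ Θ, IsAB (locAtM D K P.asIdeal P.isPrime)
      (fun E => ⨅ Q ∈ Δ P, E * locAtM D K Q.asIdeal Q.isPrime)) :
    IsAB (1 : Submodule D K) (fun E => ⨅ P ∈ Θ, ⨅ Q ∈ Δ P,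
      (E * locAtM D K P.asIdeal P.isPrime) * locAtM D K Q.asIdeal Q.isPrime) :=
  isAB_iInf_spectralClosure (fun P : PrimeSpectrum D => locAt D K P.asIdeal P.isPrime) Δ Θ hab

/-- if a family of spectral semistar operations `*_P` (`P ∈ Θ`) satisfies
condition (↓) and every `*_P` is a.b., then the wedge operation
`E ↦ ∩ {(E D_P)^{*_P} | P ∈ Θ}` is a.b. on `D`. -/
theorem stmt16 (Θ : Set (PrimeSpectrum D)) (hne : Θ.Nonempty)
    (Δ : PrimeSpectrum D → Set (PrimeSpectrum D)) (hΔne : ∀ P ∈ Θ, (Δ P).Nonempty)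
    (hΔ : ∀ P ∈ Θ, ∀ Q ∈ Δ P, Q.asIdeal ≤ P.asIdeal)
    (hdown : ∀ P ∈ Θ, ∀ P' ∈ Θ, P ≠ P' →
      ∀ Q ∈ Δ P', Q.asIdeal ≤ P.asIdeal → Q ∈ Δ P)
    (hab : ∀ P ∈ Θ, IsAB (locAtM D K P.asIdeal P.isPrime)
      (fun E => ⨅ Q ∈ Δ P, E * locAtM D K Q.asIdeal Q.isPrime)) :
    IsAB (1 : Submodule D K) (fun E => ⨅ P ∈ Θ, ⨅ Q ∈ Δ P,
      (E * locAtM D K P.asIdeal P.isPrime) * locAtM D K Q.asIdeal Q.isPrime) :=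
  stmt16_general Θ Δ hab
end

section
/- Let D be an integral domain and ⋆ a spectral semistar operation on D defined by a set Δ of primes with D_P a valuation domain for each P ∈ Δ. If (aD ∩ bD)^⋆ is of ⋆-finite type for all nonzero a, b ∈ D, then for every nonzero finitely generated ideal I of D and every nonzero a ∈ D, the ideal (I ∩ aD)^⋆ is of ⋆-finite type. -/
open Pointwise

/-!
Since `D_P` is an idempotent overring, `⋂_{P ∈ Δ} E D_P = ⋂_{P ∈ Δ} F D_P` forces `E D_P = F D_P`
for each `P ∈ Δ`, so everything is checked one prime at a time. Write `I = (b₁, …, bₙ)` with all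
`bᵢ ≠ 0`. As `D_P` is a valuation ring, one generator `b` divides all the others in `D_P`, so
`I D_P = b D_P`; localization commutes with finite intersections, so
`(I ∩ aD) D_P = b D_P ∩ a D_P = (bD ∩ aD) D_P`, whence `(I ∩ aD) D_P = Σᵢ (aD ∩ bᵢD) D_P`.
The hypothesis provides finitely generated `Fᵢ` with `(aD ∩ bᵢD)^⋆ = Fᵢ^⋆`, and `F = Σᵢ Fᵢ` works.
-/

theorem ValuationRing.exists_dvd_forall {R ι : Type*} [CommRing R] [IsDomain R] [ValuationRing R]
    {s : Finset ι} (hs : s.Nonempty) (f : ι → R) : ∃ i ∈ s, ∀ j ∈ s, f i ∣ f j := by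
  classical
  induction hs using Finset.Nonempty.cons_induction with
  | singleton i => exact ⟨i, Finset.mem_singleton_self i, fun j hj => by
      rw [Finset.mem_singleton.1 hj]⟩
  | cons i s hi hs ih =>
    obtain ⟨k, hk, hmin⟩ := ih
    rcases ValuationRing.dvd_total (f i) (f k) with hik | hki
    · refine ⟨i, Finset.mem_cons_self i s, fun j hj => ?_⟩
      rcases Finset.mem_cons.1 hj with rfl | hj
      exacts [dvd_rfl, hik.trans (hmin j hj)]
    · refine ⟨k, Finset.mem_cons_of_mem hk, fun j hj => ?_⟩
      rcases Finset.mem_cons.1 hj with rfl | hj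
      exacts [hki, hmin j hj]

theorem Ideal.exists_finset_nonempty_span_eq_of_fg_of_ne_bot {R : Type*} [CommRing R]
    {I : Ideal R} (hI : I.FG) (hI0 : I ≠ ⊥) :
    ∃ t : Finset R, t.Nonempty ∧ 0 ∉ t ∧ Ideal.span (t : Set R) = I := by
  classical
  obtain ⟨s, rfl⟩ := hI
  have hspan : Ideal.span ((s.erase 0 : Finset R) : Set R) = Ideal.span s := by
    rw [Finset.coe_erase]
    exact Ideal.span_sdiff_singleton_zero
  refine ⟨s.erase 0, Finset.nonempty_iff_ne_empty.2 fun h0 => hI0 ?_, Finset.notMem_erase 0 s,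
    hspan⟩
  rw [← hspan, h0, Finset.coe_empty, Ideal.span_empty]

section Overring

variable {D K : Type*} [CommRing D] [Field K] [Algebra D K]

theorem le_mul_toSubmodule (E : Submodule D K) (A : Subalgebra D K) :
    E ≤ E * Subalgebra.toSubmodule A :=
  le_mul_of_one_le_right' (Submodule.one_le.2 A.one_mem)

theorem mul_toSubmodule_le_mul_toSubmodule_iff {E F : Submodule D K} {A : Subalgebra D K} :
    E * Subalgebra.toSubmodule A ≤ F * Subalgebra.toSubmodule A ↔
      E ≤ F * Subalgebra.toSubmodule A := by
  refine ⟨(le_mul_toSubmodule E A).trans, fun h => ?_⟩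
  calc E * Subalgebra.toSubmodule A
      ≤ F * Subalgebra.toSubmodule A * Subalgebra.toSubmodule A := mul_le_mul_left h _
    _ = F * Subalgebra.toSubmodule A := by
      rw [mul_assoc, (Subalgebra.isIdempotentElem_toSubmodule A).eq]

theorem mul_toSubmodule_eq_of_biInf_eq {ι : Type*} {s : Set ι} (A : ι → Subalgebra D K)
    {E F : Submodule D K}
    (h : ⨅ i ∈ s, E * Subalgebra.toSubmodule (A i) = ⨅ i ∈ s, F * Subalgebra.toSubmodule (A i))
    {i : ι} (hi : i ∈ s) :
    E * Subalgebra.toSubmodule (A i) = F * Subalgebra.toSubmodule (A i) := by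
  have key : ∀ {E F : Submodule D K}, (⨅ j ∈ s, E * Subalgebra.toSubmodule (A j)) ≤
      (⨅ j ∈ s, F * Subalgebra.toSubmodule (A j)) →
      E * Subalgebra.toSubmodule (A i) ≤ F * Subalgebra.toSubmodule (A i) := fun hEF =>
    mul_toSubmodule_le_mul_toSubmodule_iff.2 <|
      (le_iInf₂ fun j _ => le_mul_toSubmodule _ (A j)).trans (hEF.trans (iInf₂_le i hi))
  exact le_antisymm (key h.le) (key h.ge)

theorem exists_map_span_le_span_singleton_mul (A : Subalgebra D K) [ValuationRing A]
    {t : Finset D} (ht : t.Nonempty) :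
    ∃ b ∈ t, Submodule.map (Algebra.linearMap D K) (Ideal.span (t : Set D)) ≤
      Submodule.span D {algebraMap D K b} * Subalgebra.toSubmodule A := by
  obtain ⟨b, hb, hdvd⟩ := ValuationRing.exists_dvd_forall ht (algebraMap D A)
  refine ⟨b, hb, Submodule.map_span_le _ _ _ |>.2 fun c hc => ?_⟩
  obtain ⟨m, hm⟩ := hdvd c hc
  have hcm : algebraMap D K c = algebraMap D K b * m := congrArg Subtype.val hm
  rw [Algebra.linearMap_apply, hcm]
  exact Submodule.mul_mem_mul (Submodule.mem_span_singleton_self _) m.2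

end Overring

section Localization

variable {D K : Type*} [CommRing D] [IsDomain D] [Field K] [Algebra D K] [IsFractionRing D K]
variable {P : Ideal D} (hP : P.IsPrime)

theorem mem_mul_locAtM_iff {E : Submodule D K} {y : K} :
    y ∈ E * locAtM D K P hP ↔ ∃ u ∈ P.primeCompl, u • y ∈ E := by
  have hu0 {u : D} (hu : u ∈ P.primeCompl) : algebraMap D K u ≠ 0 :=
    IsFractionRing.to_map_ne_zero_of_mem_nonZeroDivisors
      (mem_nonZeroDivisors_of_ne_zero fun h => hu (h ▸ P.zero_mem))
  constructor
  · intro hy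
    induction hy using Submodule.mul_induction_on' with
    | mem_mul_mem e he l hl =>
      obtain ⟨r, u, hu, rfl⟩ := hl
      refine ⟨u, hu, ?_⟩
      rw [IsFractionRing.mk'_eq_div, Algebra.smul_def, mul_left_comm, mul_div_cancel₀ _ (hu0 hu),
        mul_comm, ← Algebra.smul_def]
      exact E.smul_mem r he
    | add x _ y _ hx hy =>
      obtain ⟨u, hu, hux⟩ := hx
      obtain ⟨v, hv, hvy⟩ := hy
      refine ⟨u * v, P.primeCompl.mul_mem hu hv, ?_⟩
      rw [smul_add, mul_comm, mul_smul, mul_comm, mul_smul]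
      exact E.add_mem (E.smul_mem v hux) (E.smul_mem u hvy)
  · rintro ⟨u, hu, huy⟩
    have hinv : (algebraMap D K u)⁻¹ ∈ locAtM D K P hP :=
      ⟨1, u, hu, by rw [IsFractionRing.mk'_eq_div, map_one, one_div]⟩
    have hy : y = u • y * (algebraMap D K u)⁻¹ := by
      rw [Algebra.smul_def, mul_comm, ← mul_assoc, inv_mul_cancel₀ (hu0 hu), one_mul]
    rw [hy]
    exact Submodule.mul_mem_mul huy hinv

theorem inf_mul_locAtM (E F : Submodule D K) :
    (E ⊓ F) * locAtM D K P hP = E * locAtM D K P hP ⊓ F * locAtM D K P hP := by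
  refine le_antisymm (le_inf (mul_le_mul_left inf_le_left _) (mul_le_mul_left inf_le_right _)) ?_
  rintro y ⟨hEy, hFy⟩
  obtain ⟨u, hu, huy⟩ := (mem_mul_locAtM_iff hP).1 hEy
  obtain ⟨v, hv, hvy⟩ := (mem_mul_locAtM_iff hP).1 hFy
  refine (mem_mul_locAtM_iff hP).2 ⟨u * v, P.primeCompl.mul_mem hu hv, ?_, ?_⟩
  · rw [mul_comm, mul_smul]
    exact E.smul_mem v huy
  · rw [mul_smul]
    exact F.smul_mem u hvy

theorem map_span_inf_mul_locAtM [ValuationRing (locAt D K P hP)] {t : Finset D} (ht : t.Nonempty)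
    (E : Submodule D K) :
    (Submodule.map (Algebra.linearMap D K) (Ideal.span (t : Set D)) ⊓ E) * locAtM D K P hP =
      (⨆ b ∈ t, E ⊓ Submodule.span D {algebraMap D K b}) * locAtM D K P hP := by
  obtain ⟨b, hb, hI⟩ := exists_map_span_le_span_singleton_mul (locAt D K P hP) ht
  refine le_antisymm ?_ (mul_le_mul_left (iSup₂_le fun c hc => ?_) _)
  · calc _ ≤ (E ⊓ Submodule.span D {algebraMap D K b}) * locAtM D K P hP := by
          refine mul_toSubmodule_le_mul_toSubmodule_iff.2 ?_
          rw [← locAtM, inf_mul_locAtM]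
          exact le_inf (inf_le_right.trans (le_mul_toSubmodule _ _)) (inf_le_left.trans hI)
      _ ≤ _ := mul_le_mul_left
          (le_iSup₂ (f := fun c _ => E ⊓ Submodule.span D {algebraMap D K c}) b hb) _
  · rw [inf_comm]
    refine inf_le_inf_right E (Submodule.span_singleton_le_iff_mem _ _ |>.2 ?_)
    exact Submodule.mem_map_of_mem (Ideal.subset_span hc)

end Localization

variable {D : Type*} [CommRing D] [IsDomain D]
variable {K : Type*} [Field K] [Algebra D K] [IsFractionRing D K]

/-- under the hypotheses of Statement 17, for every nonzero finitely generated
ideal `I` of `D` and every nonzero `a ∈ D`, `(I ∩ aD)^⋆` is of `⋆`-finite type. -/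
theorem stmt18 (Δ : Set (PrimeSpectrum D))
    (hval : ∀ P ∈ Δ, ValuationRing (locAt D K P.asIdeal P.isPrime))
    (h : ∀ a b : D, a ≠ 0 → b ≠ 0 → ∃ F : Submodule D K, F.FG ∧ F ≠ ⊥ ∧
      (⨅ P ∈ Δ, (Submodule.span D {algebraMap D K a} ⊓ Submodule.span D {algebraMap D K b}) *
          locAtM D K P.asIdeal P.isPrime) =
        ⨅ P ∈ Δ, F * locAtM D K P.asIdeal P.isPrime) :
    ∀ I : Ideal D, I.FG → I ≠ ⊥ → ∀ a : D, a ≠ 0 →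
      ∃ F : Submodule D K, F.FG ∧ F ≠ ⊥ ∧
        (⨅ P ∈ Δ, (Submodule.map (Algebra.linearMap D K) I ⊓ Submodule.span D {algebraMap D K a}) *
            locAtM D K P.asIdeal P.isPrime) =
          ⨅ P ∈ Δ, F * locAtM D K P.asIdeal P.isPrime := by
  intro I hI hI0 a ha
  obtain ⟨t, ht, ht0, rfl⟩ := Ideal.exists_finset_nonempty_span_eq_of_fg_of_ne_bot hI hI0
  have hb0 {b : D} (hb : b ∈ t) : b ≠ 0 := ne_of_mem_of_not_mem hb ht0
  choose! F hFfg hF0 hFeq using fun b (hb : b ≠ 0) => h a b ha hb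
  refine ⟨⨆ b ∈ t, F b, Submodule.fg_biSup t F fun b hb => hFfg b (hb0 hb), ?_,
    iInf_congr fun P => iInf_congr fun hP => ?_⟩
  · obtain ⟨b, hb⟩ := ht
    exact fun hbot => hF0 b (hb0 hb) (le_bot_iff.1 (hbot ▸ le_iSup₂ (f := fun b _ => F b) b hb))
  · have := hval P hP
    simp only [map_span_inf_mul_locAtM P.isPrime ht, Submodule.iSup_mul]
    exact iSup_congr fun b => iSup_congr fun hb => mul_toSubmodule_eq_of_biInf_eq
      (fun P : PrimeSpectrum D => locAt D K P.asIdeal P.isPrime) (hFeq b (hb0 hb)) hP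
end
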